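/- Let n ≥ 2 be an integer and let 1 ≤ p₁,…,pₙ, r ≤ ∞. If the multilinear spherical average T is of strong type at (p₁,…,pₙ;r), then for all k, l ∈ {1,…,n} with k ≠ l one has Σ_{j=1, j∉{k,l}}^n 1/p_j + 2/p_k + 2/p_l ≤ n + 1/r. -/

import Mathlib

/-!
Knapp-type example. Fix `k ≠ l` and a small `δ > 0`. Let `f_k`, `f_l` be indicators of intervals of
length `≍ δ²` centred at `∓1/√2`, and the other `f_j` indicators of intervals of length `≍ δ`
centred at `0`. For `|x| ≤ δ` the point `σ* = x • 1 + (e_k - e_l)/√2` has `‖σ*‖² = 1 + n x²`, so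
`σ*/‖σ*‖` agrees with `σ*` up to `O(δ²)` and all `f_j(x - σ_j)` equal `1` on a piece of the sphere
of measure `≳ δ^(n-2) · δ² = δ^n`. Hence `‖T f‖_r ≳ δ^(n + 1/r)`, while
`∏ ‖f_j‖_{p_j} ≲ δ^(∑_{j ≠ k,l} 1/p_j + 2/p_k + 2/p_l)`, and `δ → 0` gives the inequality.
The spherical measure is bounded below through `σ(G) = vol((0,1) • G) / vol(B)`, by a staircase of
disjoint boxes inside the cone `(0,1) • G`.
-/

open MeasureTheory ENNReal

/-- The `L^p` "norm" (with respect to Lebesgue measure on `ℝ`) of an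
`ℝ≥0∞`-valued function, with the convention for `p = ∞`. -/
noncomputable def lpNorm (p : ℝ≥0∞) (g : ℝ → ℝ≥0∞) : ℝ≥0∞ :=
  if p = ∞ then essSup g (volume : Measure ℝ)
  else (∫⁻ x, g x ^ p.toReal) ^ (1 / p.toReal)

/-- The normalized (total mass 1) surface measure on the unit sphere
`S^{n-1} ⊂ ℝ^n`, viewed as a measure on `ℝ^n` supported on the sphere. -/
noncomputable def normSphere (n : ℕ) : Measure (EuclideanSpace ℝ (Fin n)) :=
  (Measure.map Subtype.val
      ((volume : Measure (EuclideanSpace ℝ (Fin n))).toSphere) Set.univ)⁻¹ •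
    Measure.map Subtype.val ((volume : Measure (EuclideanSpace ℝ (Fin n))).toSphere)

/-- The multilinear spherical average
`T(f₁,…,fₙ)(x) = ∫_{S^{n-1}} ∏_{j=1}^n f_j(x - σ_j) dσ(σ)`. -/
noncomputable def sphAvg (n : ℕ) (f : Fin n → ℝ → ℝ) (x : ℝ) : ℝ≥0∞ :=
  ∫⁻ σ, ∏ j, ENNReal.ofReal (f j (x - σ j)) ∂(normSphere n)

open Metric Set Filter Topology Finset
open scoped Pointwise

theorem lpNorm_indicator_one_le (p : ℝ≥0∞) {A : Set ℝ} (hA : MeasurableSet A) :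
    lpNorm p (A.indicator 1) ≤ volume A ^ (p⁻¹).toReal := by
  unfold _root_.lpNorm
  split_ifs with hp
  · subst hp
    simpa using essSup_le_of_ae_le 1
      (Eventually.of_forall fun x => indicator_le_self' (by simp) x)
  rcases eq_or_ne p 0 with rfl | hp0
  · simp
  have ht : 0 < p.toReal := ENNReal.toReal_pos hp0 hp
  have hpow : (fun x => A.indicator (1 : ℝ → ℝ≥0∞) x ^ p.toReal) = A.indicator 1 := by
    ext x; by_cases hx : x ∈ A <;> simp [hx, ht]
  rw [hpow, lintegral_indicator_one hA, ENNReal.toReal_inv, one_div]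

theorem mul_rpow_le_lpNorm {r : ℝ≥0∞} (hr : r ≠ 0) {g : ℝ → ℝ≥0∞} {c : ℝ≥0∞} {A : Set ℝ}
    (hA : MeasurableSet A) (hA0 : volume A ≠ 0) (hle : ∀ x ∈ A, c ≤ g x) :
    c * volume A ^ (r⁻¹).toReal ≤ lpNorm r g := by
  unfold _root_.lpNorm
  split_ifs with hrt
  · subst hrt
    simp only [ENNReal.inv_top, ENNReal.toReal_zero, ENNReal.rpow_zero, mul_one]
    by_contra! hlt
    exact hA0 (measure_mono_null (fun x hx => not_lt.2 (hle x hx)) (ae_lt_of_essSup_lt hlt))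
  have ht : 0 < r.toReal := ENNReal.toReal_pos hr hrt
  have hint : c ^ r.toReal * volume A ≤ ∫⁻ x, g x ^ r.toReal := by
    rw [← lintegral_indicator_const hA]
    refine lintegral_mono fun x => ?_
    by_cases hx : x ∈ A
    · simpa [hx] using ENNReal.rpow_le_rpow (hle x hx) ht.le
    · simp [hx]
  calc c * volume A ^ r⁻¹.toReal = (c ^ r.toReal * volume A) ^ (1 / r.toReal) := by
        rw [ENNReal.mul_rpow_of_nonneg _ _ (by positivity), ← ENNReal.rpow_mul,
          mul_one_div_cancel ht.ne', ENNReal.rpow_one, ENNReal.toReal_inv, one_div]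
    _ ≤ _ := ENNReal.rpow_le_rpow hint (by positivity)

theorem le_of_forall_mul_rpow_le {α β c C δ₀ : ℝ} (hc : 0 < c) (hδ₀ : 0 < δ₀)
    (h : ∀ δ, 0 < δ → δ ≤ δ₀ → c * δ ^ α ≤ C * δ ^ β) : β ≤ α := by
  by_contra! hαβ
  have hq : 0 < β - α := sub_pos.2 hαβ
  have hlim : Tendsto (fun δ : ℝ => C * δ ^ (β - α)) (𝓝[>] 0) (𝓝 0) := by
    have := (Real.continuousAt_rpow_const 0 (β - α) (Or.inr hq.le)).tendsto.const_mul C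
    simpa [Real.zero_rpow hq.ne'] using this.mono_left nhdsWithin_le_nhds
  have hev : ∀ᶠ δ in 𝓝[>] (0 : ℝ), c ≤ C * δ ^ (β - α) := by
    filter_upwards [Ioc_mem_nhdsGT hδ₀] with δ ⟨hδ, hδle⟩
    rw [Real.rpow_sub hδ, mul_div_assoc', le_div_iff₀ (Real.rpow_pos_of_pos hδ α)]
    exact h δ hδ hδle
  exact hc.not_ge (ge_of_tendsto hlim hev)

theorem prod_mul_pow_rpow_le {ι : Type*} [Fintype ι] {b δ : ℝ} (hb : 1 ≤ b) (hδ : 0 < δ)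
    (e : ι → ℕ) {s : ι → ℝ} (hs1 : ∀ j, s j ≤ 1) :
    ∏ j, (b * δ ^ e j) ^ s j ≤ b ^ Fintype.card ι * δ ^ ∑ j, (e j : ℝ) * s j := by
  have hfac : ∀ j, (b * δ ^ e j) ^ s j = b ^ s j * δ ^ ((e j : ℝ) * s j) := fun j => by
    rw [Real.mul_rpow (by positivity) (by positivity), ← Real.rpow_natCast,
      ← Real.rpow_mul hδ.le]
  rw [Finset.prod_congr rfl fun j _ => hfac j, Finset.prod_mul_distrib,
    ← Real.rpow_sum_of_pos hδ]
  gcongr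
  calc ∏ j, b ^ s j ≤ ∏ _j : ι, b := Finset.prod_le_prod (fun j _ => by positivity)
        fun j _ => Real.rpow_le_self_of_one_le hb (hs1 j)
    _ = b ^ Fintype.card ι := by simp

theorem mem_Ioo_smul_sphere_inter {E : Type*} [NormedAddCommGroup E] [NormedSpace ℝ E]
    {s : Set E} {y : E} (hy0 : 0 < ‖y‖) (hy1 : ‖y‖ < 1) (hys : ‖y‖⁻¹ • y ∈ s) :
    y ∈ Ioo (0 : ℝ) 1 • (sphere 0 1 ∩ s) :=
  Set.mem_smul.2 ⟨‖y‖, ⟨hy0, hy1⟩, ‖y‖⁻¹ • y,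
    ⟨by simp [norm_smul, hy0.ne'], hys⟩, smul_inv_smul₀ hy0.ne' y⟩

theorem normSphere_apply {n : ℕ} (hn : n ≠ 0) {s : Set (EuclideanSpace ℝ (Fin n))}
    (hs : MeasurableSet s) :
    normSphere n s = volume (Ioo (0 : ℝ) 1 • (sphere 0 1 ∩ s)) /
      volume (ball (0 : EuclideanSpace ℝ (Fin n)) 1) := by
  rw [normSphere, Measure.smul_apply, smul_eq_mul, Measure.map_apply measurable_subtype_coe hs,
    Measure.map_apply measurable_subtype_coe MeasurableSet.univ, preimage_univ,
    Measure.toSphere_apply_univ, Measure.toSphere_apply' _ (measurable_subtype_coe hs),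
    Subtype.image_preimage_coe, finrank_euclideanSpace_fin, mul_comm, ← div_eq_mul_inv,
    ENNReal.mul_div_mul_left _ _ (by exact_mod_cast hn) (ENNReal.natCast_ne_top n)]

theorem volume_setOf_forall_mem_Ico {ι : Type*} [Fintype ι] (a h : ι → ℝ) :
    volume {y : EuclideanSpace ℝ ι | ∀ j, y j ∈ Ico (a j) (a j + h j)} =
      ∏ j, ENNReal.ofReal (h j) := by
  have hpre : {y : EuclideanSpace ℝ ι | ∀ j, y j ∈ Ico (a j) (a j + h j)} =
      WithLp.ofLp ⁻¹' univ.pi fun j => Ico (a j) (a j + h j) := by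
    ext; simp
  rw [hpre, (PiLp.volume_preserving_ofLp ι).measure_preimage
    (MeasurableSet.univ_pi fun _ => measurableSet_Ico).nullMeasurableSet, Real.volume_pi_Ico]
  simp

theorem isClosed_setOf_forall_sub_mem {n : ℕ} {S : Fin n → Set ℝ} (hS : ∀ j, IsClosed (S j))
    (x : ℝ) : IsClosed {σ : EuclideanSpace ℝ (Fin n) | ∀ j, x - σ j ∈ S j} := by
  simp only [ofPred_forall]
  exact isClosed_iInter fun j => (hS j).preimage (by fun_prop)

theorem normSphere_le_sphAvg_indicator {n : ℕ} {S : Fin n → Set ℝ} (hS : ∀ j, IsClosed (S j))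
    (x : ℝ) :
    normSphere n {σ | ∀ j, x - σ j ∈ S j} ≤ sphAvg n (fun j => (S j).indicator 1) x := by
  rw [← lintegral_indicator_one (isClosed_setOf_forall_sub_mem hS x).measurableSet]
  refine lintegral_mono fun σ => ?_
  by_cases hσ : ∀ j, x - σ j ∈ S j <;> simp [hσ]

theorem abs_sub_le_abs_sq_sub_sq_div {w ρ : ℝ} (hw : 0 ≤ w) (hρ : 0 < ρ) :
    |w - ρ| ≤ |w ^ 2 - ρ ^ 2| / ρ := by
  rw [le_div_iff₀ hρ, show w ^ 2 - ρ ^ 2 = (w - ρ) * (w + ρ) by ring, abs_mul,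
    abs_of_pos (by linarith : 0 < w + ρ)]
  gcongr
  linarith

theorem abs_perturbed_sq_sub_le {ρ x c e h δ : ℝ} (hρ0 : 0 ≤ ρ) (hρ1 : ρ ≤ 1) (hx : |x| ≤ δ)
    (he0 : 0 ≤ e) (heh : e ≤ h) (hhδ : h ≤ δ) (hch : |x + c| * h ≤ δ ^ 2) :
    |(ρ * (x + c) + e) ^ 2 - (ρ ^ 2 * c ^ 2 + 2 * ρ ^ 2 * x * c)| ≤ 4 * δ ^ 2 := by
  have hx2 : ρ ^ 2 * x ^ 2 ≤ δ ^ 2 := by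
    have hρ2 : ρ ^ 2 ≤ 1 := by nlinarith
    calc ρ ^ 2 * x ^ 2 ≤ 1 * x ^ 2 := by gcongr
      _ ≤ δ ^ 2 := by rw [one_mul]; exact sq_le_sq' (abs_le.1 hx).1 (abs_le.1 hx).2
  have hcross : |ρ * ((x + c) * e)| ≤ δ ^ 2 := by
    rw [abs_mul, abs_mul, abs_of_nonneg hρ0, abs_of_nonneg he0]
    calc ρ * (|x + c| * e) ≤ 1 * (|x + c| * h) := by gcongr
      _ ≤ δ ^ 2 := by linarith
  have he2 : e ^ 2 ≤ δ ^ 2 := pow_le_pow_left₀ he0 (heh.trans hhδ) 2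
  rw [show (ρ * (x + c) + e) ^ 2 - (ρ ^ 2 * c ^ 2 + 2 * ρ ^ 2 * x * c) =
    ρ ^ 2 * x ^ 2 + 2 * (ρ * ((x + c) * e)) + e ^ 2 by ring]
  have := abs_le.1 hcross
  rw [abs_le]
  constructor <;> nlinarith

theorem abs_div_sub_le {ρ w z e h ε : ℝ} (hw : 1 / 4 ≤ w) (hwρ : |w - ρ| ≤ ε) (hz : |z| ≤ 1)
    (he0 : 0 ≤ e) (heh : e ≤ h) :
    |(ρ * z + e) / w - z| ≤ 4 * (ε + h) := by
  have hw0 : 0 < w := by linarith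
  have hε : 0 ≤ ε := (abs_nonneg _).trans hwρ
  rw [show (ρ * z + e) / w - z = ((ρ - w) * z + e) / w by field_simp; ring, abs_div,
    abs_of_pos hw0, div_le_iff₀ hw0]
  calc |(ρ - w) * z + e| ≤ |ρ - w| * |z| + e := by
        simpa [abs_mul, abs_of_nonneg he0] using abs_add_le ((ρ - w) * z) e
    _ ≤ ε * 1 + h := by
        rw [abs_sub_comm]; gcongr
    _ ≤ 4 * (ε + h) * w := by nlinarith [abs_nonneg (w - ρ)]

theorem pow_div_le_floor_mul_pow {δ z : ℝ} (hδ : 0 < δ) (hδ4 : δ ≤ 1 / 4) (hz : 1 / 2 ≤ z)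
    (n : ℕ) : δ ^ n / 16 ≤ ⌊z / (4 * δ ^ 2)⌋₊ * δ ^ (n + 2) := by
  have hδ2 : 0 < δ ^ 2 := by positivity
  have hM : 1 / (16 * δ ^ 2) ≤ ⌊z / (4 * δ ^ 2)⌋₊ := by
    have hfloor := Nat.sub_one_lt_floor (z / (4 * δ ^ 2))
    have hle : 1 / (16 * δ ^ 2) ≤ z / (4 * δ ^ 2) - 1 := by
      rw [div_sub_one (by positivity), div_le_div_iff₀ (by positivity) (by positivity)]
      have : 1 ≤ 4 * (z - 4 * δ ^ 2) := by nlinarith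
      nlinarith
    linarith
  calc δ ^ n / 16 = 1 / (16 * δ ^ 2) * δ ^ (n + 2) := by field_simp; ring
    _ ≤ _ := by gcongr

namespace KnappExample

variable {n : ℕ} (k l : Fin n)

-- `∑ j, center j = 0` and `∑ j, center j ^ 2 = 1`, so `‖x • 1 + center‖² = 1 + n x²` has no term
-- linear in `x`: this is what keeps `σ*/‖σ*‖` within `O(δ²)` of `σ*`.
noncomputable def center (j : Fin n) : ℝ :=
  if j = k then √2 / 2 else if j = l then -(√2 / 2) else 0

def exponent (j : Fin n) : ℕ := if j = k ∨ j = l then 2 else 1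

def width (n : ℕ) : ℝ := 32 * n + 4

noncomputable def testSet (δ : ℝ) (j : Fin n) : Set ℝ :=
  closedBall (-center k l j) (width n * δ ^ exponent k l j)

noncomputable def testFun (δ : ℝ) (j : Fin n) : ℝ → ℝ := (testSet k l δ j).indicator 1

def box (x δ ρ : ℝ) : Set (EuclideanSpace ℝ (Fin n)) :=
  {y | ∀ j, y j ∈ Ico (ρ * (x + center k l j)) (ρ * (x + center k l j) + δ ^ exponent k l j)}

-- Consecutive radii shift the `k`-th side of `box k l x δ (radius x δ m)` by exactly its length
-- `δ²`, so these boxes are pairwise disjoint.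
noncomputable def radius (x δ : ℝ) (m : ℕ) : ℝ := 1 / 2 + m * δ ^ 2 / (x + √2 / 2)

variable (n) in
noncomputable def sphereConst : ℝ :=
  (volume (ball (0 : EuclideanSpace ℝ (Fin n)) 1))⁻¹.toReal / 16

variable {k l}

theorem one_le_two_mul_width (n : ℕ) : 1 ≤ 2 * width n := by
  rw [width]; linarith [n.cast_nonneg (α := ℝ)]

theorem sphereConst_pos (n : ℕ) : 0 < sphereConst n :=
  div_pos (ENNReal.toReal_pos (ENNReal.inv_ne_zero.2 measure_ball_lt_top.ne)
    (ENNReal.inv_ne_top.2 (measure_ball_pos _ _ one_pos).ne')) (by norm_num)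

theorem sum_center (hkl : k ≠ l) : ∑ j, center k l j = 0 := by
  rw [Fintype.sum_eq_add k l hkl fun j hj => by simp [center, hj.1, hj.2]]
  simp [center, hkl.symm]

theorem sum_center_sq (hkl : k ≠ l) : ∑ j, center k l j ^ 2 = 1 := by
  rw [Fintype.sum_eq_add k l hkl fun j hj => by simp [center, hj.1, hj.2]]
  simp [center, hkl.symm, div_pow]
  norm_num

theorem sum_exponent_smul {M : Type*} [AddCommMonoid M] (hkl : k ≠ l) (g : Fin n → M) :
    ∑ j, exponent k l j • g j = (∑ j ∈ (univ.erase k).erase l, g j) + 2 • g k + 2 • g l := by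
  have hl : l ∈ univ.erase k := mem_erase.2 ⟨hkl.symm, mem_univ l⟩
  have hrest : ∑ j ∈ (univ.erase k).erase l, exponent k l j • g j =
      ∑ j ∈ (univ.erase k).erase l, g j := sum_congr rfl fun j hj => by
    rw [mem_erase, mem_erase] at hj
    simp [exponent, hj.1, hj.2.1]
  rw [← add_sum_erase _ _ (mem_univ k), ← add_sum_erase _ _ hl, hrest]
  simp only [exponent, true_or, or_true, if_true]
  abel

theorem sum_exponent (hkl : k ≠ l) : ∑ j, exponent k l j = n + 2 := by
  have h := sum_exponent_smul hkl fun _ => (1 : ℕ)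
  have hl := card_erase_add_one (mem_erase.2 ⟨hkl.symm, mem_univ l⟩)
  have hk := card_erase_add_one (mem_univ k)
  simp only [smul_eq_mul, mul_one, sum_const] at h
  rw [card_univ, Fintype.card_fin] at hk
  omega

theorem coordinate_bounds (hkl : k ≠ l) {x δ : ℝ} (hδ : 0 < δ) (hδ8 : δ ≤ 1 / 8)
    (hx : |x| ≤ δ) (j : Fin n) :
    |x + center k l j| ≤ 1 ∧ |x + center k l j| * δ ^ exponent k l j ≤ δ ^ 2 ∧
      δ ^ 2 ≤ δ ^ exponent k l j ∧ δ ^ exponent k l j ≤ δ := by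
  have ha : √2 / 2 ≤ 3 / 4 := by
    nlinarith [Real.sq_sqrt (zero_le_two : (0 : ℝ) ≤ 2), Real.sqrt_nonneg 2]
  have hδ1 : δ ^ 2 ≤ δ := by nlinarith
  have hspecial : ∀ j, j = k ∨ j = l → |x + center k l j| ≤ 1 := by
    have ha0 : |√2 / 2| = √2 / 2 := abs_of_nonneg (by positivity)
    rintro j (rfl | rfl) <;> simp only [center, hkl.symm, if_true, if_false] <;>
      refine (abs_add_le _ _).trans ?_ <;> simp only [abs_neg, ha0] <;> linarith
  by_cases hj : j = k ∨ j = l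
  · have h1 := hspecial j hj
    simp only [exponent, hj, if_true]
    exact ⟨h1, by nlinarith [abs_nonneg (x + center k l j)], le_rfl, hδ1⟩
  · push Not at hj
    simp only [exponent, center, hj.1, hj.2, or_self, if_false, add_zero, pow_one]
    exact ⟨by linarith, by nlinarith [abs_nonneg x], hδ1, le_rfl⟩

theorem abs_norm_sq_sub_sq_le (hkl : k ≠ l) {x δ ρ : ℝ} (hδ : 0 < δ) (hδ8 : δ ≤ 1 / 8)
    (hx : |x| ≤ δ) (hρ0 : 0 ≤ ρ) (hρ1 : ρ ≤ 1) {y : EuclideanSpace ℝ (Fin n)}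
    (hy : y ∈ box k l x δ ρ) : |‖y‖ ^ 2 - ρ ^ 2| ≤ n * (4 * δ ^ 2) := by
  have hρ : ρ ^ 2 = ∑ j, (ρ ^ 2 * center k l j ^ 2 + 2 * ρ ^ 2 * x * center k l j) := by
    rw [sum_add_distrib, ← mul_sum, ← mul_sum, sum_center_sq hkl, sum_center hkl]; ring
  rw [EuclideanSpace.real_norm_sq_eq, hρ, ← sum_sub_distrib]
  refine (abs_sum_le_sum_abs _ _).trans ?_
  calc _ ≤ ∑ _j : Fin n, 4 * δ ^ 2 := sum_le_sum fun j _ => ?_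
    _ = n * (4 * δ ^ 2) := by simp
  obtain ⟨-, hch, -, hhδ⟩ := coordinate_bounds hkl hδ hδ8 hx j
  obtain ⟨e, he0, heh, hyj⟩ : ∃ e, 0 ≤ e ∧ e ≤ δ ^ exponent k l j ∧
      y j = ρ * (x + center k l j) + e :=
    ⟨y j - ρ * (x + center k l j), by linarith [(hy j).1], by linarith [(hy j).2], by ring⟩
  rw [hyj]
  exact abs_perturbed_sq_sub_le hρ0 hρ1 hx he0 heh hhδ hch

theorem mem_cone_of_mem_box (hkl : k ≠ l) {x δ ρ : ℝ} (hδ : 0 < δ) (hδn : 8 * n * δ ≤ 1)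
    (hx : |x| ≤ δ) (hρ : ρ ∈ Set.Icc (1 / 2) (3 / 4)) {y : EuclideanSpace ℝ (Fin n)}
    (hy : y ∈ box k l x δ ρ) :
    y ∈ Ioo (0 : ℝ) 1 • (sphere 0 1 ∩ {σ | ∀ j, x - σ j ∈ testSet k l δ j}) := by
  have hn : (1 : ℝ) ≤ n := Nat.one_le_cast.2 k.pos
  have hδ8 : δ ≤ 1 / 8 := by nlinarith
  have hnorm : |‖y‖ - ρ| ≤ 8 * n * δ ^ 2 :=
    calc |‖y‖ - ρ| ≤ |‖y‖ ^ 2 - ρ ^ 2| / ρ :=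
          abs_sub_le_abs_sq_sub_sq_div (norm_nonneg y) (by linarith [hρ.1])
      _ ≤ n * (4 * δ ^ 2) / (1 / 2) := div_le_div₀ (by positivity)
          (abs_norm_sq_sub_sq_le hkl hδ hδ8 hx (by linarith [hρ.1]) (by linarith [hρ.2]) hy)
          (by norm_num) hρ.1
      _ = 8 * n * δ ^ 2 := by ring
  have hsmall : 8 * n * δ ^ 2 ≤ δ := by nlinarith
  have hy4 : 1 / 4 ≤ ‖y‖ := by linarith [(abs_le.1 hnorm).1, hρ.1]
  refine mem_Ioo_smul_sphere_inter (by linarith)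
    (by linarith [(abs_le.1 hnorm).2, hρ.2]) fun j => ?_
  obtain ⟨hc1, -, hδh, -⟩ := coordinate_bounds hkl hδ hδ8 hx j
  have hdir := abs_div_sub_le hy4 hnorm hc1 (sub_nonneg.2 (hy j).1)
    (by linarith [(hy j).2] : y j - ρ * (x + center k l j) ≤ δ ^ exponent k l j)
  rw [testSet, mem_closedBall, Real.dist_eq, PiLp.smul_apply, smul_eq_mul]
  calc |x - ‖y‖⁻¹ * y j - -center k l j|
      = |(ρ * (x + center k l j) + (y j - ρ * (x + center k l j))) / ‖y‖ -
          (x + center k l j)| := by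
        rw [abs_sub_comm]; congr 1; ring
    _ ≤ 4 * (8 * n * δ ^ 2 + δ ^ exponent k l j) := hdir
    _ ≤ width n * δ ^ exponent k l j := by
        rw [width]; nlinarith [mul_le_mul_of_nonneg_left hδh (by positivity : (0 : ℝ) ≤ n)]

theorem measurableSet_box (x δ ρ : ℝ) : MeasurableSet (box k l x δ ρ) := by
  simp only [box, ofPred_forall]
  exact MeasurableSet.iInter fun j => measurableSet_Ico.preimage (by fun_prop)

theorem volume_box (hkl : k ≠ l) {δ : ℝ} (hδ : 0 ≤ δ) (x ρ : ℝ) :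
    volume (box k l x δ ρ) = ENNReal.ofReal (δ ^ (n + 2)) := by
  rw [box, volume_setOf_forall_mem_Ico, ← ENNReal.ofReal_prod_of_nonneg fun j _ => by positivity,
    prod_pow_eq_pow_sum, sum_exponent hkl]

theorem radius_mem_Icc {x δ : ℝ} (hxa : 0 < x + √2 / 2) (hδ : 0 < δ) {m : ℕ}
    (hm : m < ⌊(x + √2 / 2) / (4 * δ ^ 2)⌋₊) : radius x δ m ∈ Set.Icc (1 / 2) (3 / 4) := by
  have hm' : (m : ℝ) < (x + √2 / 2) / (4 * δ ^ 2) :=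
    (Nat.cast_lt.2 hm).trans_le (Nat.floor_le (by positivity))
  rw [lt_div_iff₀ (by positivity)] at hm'
  refine ⟨le_add_of_nonneg_right (by positivity), ?_⟩
  have hstep : m * δ ^ 2 / (x + √2 / 2) ≤ 1 / 4 := by
    rw [div_le_iff₀ hxa]; linarith
  rw [radius]; linarith

theorem pairwise_disjoint_box_radius {x : ℝ} (hxa : 0 < x + √2 / 2) (δ : ℝ) :
    Pairwise (Function.onFun Disjoint fun m => box k l x δ (radius x δ m)) := by
  intro m m' hne
  rw [Function.onFun, Set.disjoint_left]
  intro y hy hy'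
  have hk : ∀ m : ℕ, radius x δ m * (x + center k l k) = (x + √2 / 2) / 2 + m * δ ^ 2 := by
    intro m; rw [center, if_pos rfl, radius, add_mul, div_mul_cancel₀ _ hxa.ne']; ring
  have h := hy k
  have h' := hy' k
  simp only [hk, exponent, true_or, if_true, Set.mem_Ico] at h h'
  have h1 : (m : ℝ) < m' + 1 := lt_of_mul_lt_mul_right (by linarith) (sq_nonneg δ)
  have h2 : (m' : ℝ) < m + 1 := lt_of_mul_lt_mul_right (by linarith) (sq_nonneg δ)
  norm_cast at h1 h2
  omega

theorem ofReal_le_normSphere (hkl : k ≠ l) {x δ : ℝ} (hδ : 0 < δ) (hδn : 8 * n * δ ≤ 1)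
    (hx : |x| ≤ δ) :
    ENNReal.ofReal (sphereConst n * δ ^ n) ≤
      normSphere n {σ | ∀ j, x - σ j ∈ testSet k l δ j} := by
  have hn : (1 : ℝ) ≤ n := Nat.one_le_cast.2 k.pos
  have hδ8 : δ ≤ 1 / 8 := by nlinarith
  have hxa : 1 / 2 ≤ x + √2 / 2 := by
    nlinarith [(abs_le.1 hx).1, Real.sq_sqrt (zero_le_two : (0 : ℝ) ≤ 2), Real.sqrt_nonneg 2]
  set M := ⌊(x + √2 / 2) / (4 * δ ^ 2)⌋₊
  have hG := isClosed_setOf_forall_sub_mem (S := testSet k l δ) (fun _ => isClosed_closedBall) x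
  rw [normSphere_apply k.pos.ne' hG.measurableSet,
    sphereConst, div_mul_comm, mul_comm, ENNReal.ofReal_mul (by positivity),
    ENNReal.ofReal_toReal (ENNReal.inv_ne_top.2 (measure_ball_pos _ _ one_pos).ne'),
    ← ENNReal.div_eq_inv_mul]
  gcongr
  calc ENNReal.ofReal (δ ^ n / 16) ≤ ENNReal.ofReal (M * δ ^ (n + 2)) :=
        ENNReal.ofReal_le_ofReal (pow_div_le_floor_mul_pow hδ (by linarith) hxa n)
    _ = volume (⋃ m ∈ range M, box k l x δ (radius x δ m)) := by
        rw [measure_biUnion_finset ((pairwise_disjoint_box_radius (by linarith) δ).set_pairwise _)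
          fun m _ => measurableSet_box x δ _]
        simp [volume_box hkl hδ.le, ENNReal.ofReal_mul]
    _ ≤ _ := measure_mono <| iUnion₂_subset fun m hm y hy => mem_cone_of_mem_box hkl hδ hδn hx
          (radius_mem_Icc (by linarith) hδ (mem_range.1 hm)) hy

theorem ofReal_le_lpNorm_sphAvg_testFun (hkl : k ≠ l) {r : ℝ≥0∞} (hr : r ≠ 0) {δ : ℝ}
    (hδ : 0 < δ) (hδn : 8 * n * δ ≤ 1) :
    ENNReal.ofReal (sphereConst n * δ ^ ((n : ℝ) + r⁻¹.toReal)) ≤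
      lpNorm r (sphAvg n (testFun k l δ)) := by
  have hvol : volume (Icc (-δ) δ) = ENNReal.ofReal (2 * δ) := by
    rw [Real.volume_Icc]; ring_nf
  calc ENNReal.ofReal (sphereConst n * δ ^ ((n : ℝ) + r⁻¹.toReal))
      ≤ ENNReal.ofReal (sphereConst n * δ ^ n) * volume (Icc (-δ) δ) ^ r⁻¹.toReal := by
        have hκ := sphereConst_pos n
        rw [hvol, ENNReal.ofReal_rpow_of_pos (by positivity), ← ENNReal.ofReal_mul (by positivity),
          Real.rpow_add hδ, Real.rpow_natCast, ← mul_assoc]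
        gcongr
        linarith
    _ ≤ lpNorm r (sphAvg n (testFun k l δ)) :=
        mul_rpow_le_lpNorm hr measurableSet_Icc (by simp [hvol, hδ]) fun x hx =>
          (ofReal_le_normSphere hkl hδ hδn (abs_le.2 hx)).trans
            (normSphere_le_sphAvg_indicator (fun _ => isClosed_closedBall) x)

theorem prod_lpNorm_testFun_le {p : Fin n → ℝ≥0∞} (hp : ∀ j, 1 ≤ p j) {δ : ℝ} (hδ : 0 < δ) :
    ∏ j, lpNorm (p j) (fun x => ENNReal.ofReal (testFun k l δ j x)) ≤
      ENNReal.ofReal ((2 * width n) ^ n * δ ^ ∑ j, (exponent k l j : ℝ) * (p j)⁻¹.toReal) := by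
  have hK := one_le_two_mul_width n
  have hf : ∀ j, (fun x => ENNReal.ofReal (testFun k l δ j x)) = (testSet k l δ j).indicator 1 :=
    fun j => funext fun x => by by_cases hx : x ∈ testSet k l δ j <;> simp [testFun, hx]
  calc ∏ j, lpNorm (p j) (fun x => ENNReal.ofReal (testFun k l δ j x))
      ≤ ∏ j, ENNReal.ofReal (2 * width n * δ ^ exponent k l j) ^ (p j)⁻¹.toReal :=
        prod_le_prod' fun j _ => by
          rw [hf, mul_assoc, ← Real.volume_closedBall]
          exact lpNorm_indicator_one_le _ measurableSet_closedBall
    _ = ENNReal.ofReal (∏ j, (2 * width n * δ ^ exponent k l j) ^ (p j)⁻¹.toReal) := by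
        rw [ENNReal.ofReal_prod_of_nonneg fun j _ => by positivity]
        exact prod_congr rfl fun j _ => ENNReal.ofReal_rpow_of_pos (by positivity)
    _ ≤ _ := by
        refine ENNReal.ofReal_le_ofReal ?_
        simpa using prod_mul_pow_rpow_le hK hδ (exponent k l) (s := fun j => (p j)⁻¹.toReal)
          fun j => ENNReal.toReal_le_of_le_ofReal zero_le_one
            (by rw [ENNReal.ofReal_one]; exact ENNReal.inv_le_one.2 (hp j))

theorem sum_one_div_eq_ofReal (hkl : k ≠ l) {p : Fin n → ℝ≥0∞} (hp : ∀ j, p j ≠ 0) :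
    (∑ j ∈ (univ.erase k).erase l, 1 / p j) + 2 / p k + 2 / p l =
      ENNReal.ofReal (∑ j, (exponent k l j : ℝ) * (p j)⁻¹.toReal) := by
  have hinv : ∀ j, ENNReal.ofReal (p j)⁻¹.toReal = 1 / p j := fun j => by
    rw [ENNReal.ofReal_toReal (ENNReal.inv_ne_top.2 (hp j)), one_div]
  rw [ENNReal.ofReal_sum_of_nonneg fun j _ => by positivity]
  simp only [← nsmul_eq_mul, ENNReal.ofReal_nsmul, hinv, sum_exponent_smul hkl]
  simp [nsmul_eq_mul, div_eq_mul_inv]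

end KnappExample

open KnappExample

theorem necessary_condition_iii_general (n : ℕ) (p : Fin n → ℝ≥0∞) (r : ℝ≥0∞)
    (hp : ∀ j, 1 ≤ p j) (hr : 1 ≤ r)
    (hT : ∃ C : ℝ, 0 < C ∧ ∀ f : Fin n → ℝ → ℝ,
      (∀ j, Measurable (f j)) → (∀ j x, 0 ≤ f j x) →
      lpNorm r (sphAvg n f) ≤ ENNReal.ofReal C *
        ∏ j, lpNorm (p j) (fun x => ENNReal.ofReal (f j x))) :
    ∀ k l : Fin n, k ≠ l →
      (∑ j ∈ (Finset.univ.erase k).erase l, 1 / p j) + 2 / p k + 2 / p l ≤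
        (n : ℝ≥0∞) + 1 / r := by
  obtain ⟨C, hC, hT⟩ := hT
  intro k l hkl
  have hr0 : r ≠ 0 := (zero_lt_one.trans_le hr).ne'
  have hn : (0 : ℝ) < n := Nat.cast_pos.2 k.pos
  have hexp : ∑ j, (exponent k l j : ℝ) * (p j)⁻¹.toReal ≤ n + r⁻¹.toReal := by
    refine le_of_forall_mul_rpow_le (sphereConst_pos n) (C := C * (2 * width n) ^ n)
      (δ₀ := 1 / (8 * n)) (by positivity) fun δ hδ hδn => ?_
    rw [le_div_iff₀ (by positivity), mul_comm] at hδn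
    have hK := one_le_two_mul_width n
    have h := (ofReal_le_lpNorm_sphAvg_testFun hkl hr0 hδ hδn).trans <|
      (hT (testFun k l δ) (fun j => measurable_one.indicator measurableSet_closedBall)
        fun j => indicator_nonneg fun _ _ => zero_le_one).trans <|
      mul_le_mul_right (prod_lpNorm_testFun_le hp hδ) _
    rwa [← ENNReal.ofReal_mul hC.le, ENNReal.ofReal_le_ofReal_iff (by positivity),
      ← mul_assoc] at h
  rw [sum_one_div_eq_ofReal hkl fun j => (zero_lt_one.trans_le (hp j)).ne', one_div,
    ← ENNReal.ofReal_toReal (ENNReal.inv_ne_top.2 hr0), ← ENNReal.ofReal_natCast,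
    ← ENNReal.ofReal_add n.cast_nonneg ENNReal.toReal_nonneg]
  exact ENNReal.ofReal_le_ofReal hexp

theorem necessary_condition_iii (n : ℕ) (hn : 2 ≤ n) (p : Fin n → ℝ≥0∞) (r : ℝ≥0∞)
    (hp : ∀ j, 1 ≤ p j) (hr : 1 ≤ r)
    (hT : ∃ C : ℝ, 0 < C ∧ ∀ f : Fin n → ℝ → ℝ,
      (∀ j, Measurable (f j)) → (∀ j x, 0 ≤ f j x) →
      lpNorm r (sphAvg n f) ≤ ENNReal.ofReal C *
        ∏ j, lpNorm (p j) (fun x => ENNReal.ofReal (f j x))) :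
    ∀ k l : Fin n, k ≠ l →
      (∑ j ∈ (Finset.univ.erase k).erase l, 1 / p j) + 2 / p k + 2 / p l ≤
        (n : ℝ≥0∞) + 1 / r :=
  necessary_condition_iii_general n p r hp hr hT
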